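/- The amplification factor of the P = 0 semi-Lagrangian scheme for the linear flux f(q) = aq, given by g(θ) = (2 + cos θ)/3 − i ν sin θ with ν = aΔt/Δx, satisfies |g(θ)|² = ((2 + cos θ)/3)² + ν² sin²θ, and |g(θ)| ≤ 1 for all θ ∈ ℝ if and only if ν² ≤ 1/3. -/

import Mathlib

open Complex

lemma part1 (ν : ℝ) (θ : ℝ) :
    ‖((2 + Real.cos θ) / 3 : ℝ) - Complex.I * (ν * Real.sin θ)‖ ^ 2
      = ((2 + Real.cos θ) / 3) ^ 2 + ν ^ 2 * Real.sin θ ^ 2 := by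
  rw [← Complex.normSq_eq_norm_sq]
  simp [Complex.normSq_apply, Complex.cos_ofReal_re, Complex.sin_ofReal_re]
  ring

/-- Von Neumann amplification factor of the P = 0 semi-Lagrangian scheme:
`|g(θ)|² = ((2+cos θ)/3)² + ν² sin² θ`, and `|g(θ)| ≤ 1` for all `θ` iff
`ν² ≤ 1/3`. -/
theorem stmt_4 (ν : ℝ) :
    (∀ θ : ℝ,
      ‖((2 + Real.cos θ) / 3 : ℝ) - Complex.I * (ν * Real.sin θ)‖ ^ 2
        = ((2 + Real.cos θ) / 3) ^ 2 + ν ^ 2 * Real.sin θ ^ 2) ∧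
    ((∀ θ : ℝ,
        ‖((2 + Real.cos θ) / 3 : ℝ) - Complex.I * (ν * Real.sin θ)‖ ≤ 1)
      ↔ ν ^ 2 ≤ 1 / 3) := by
  refine ⟨part1 ν, ?_, ?_⟩
  · intro h
    -- key pointwise inequality: for θ with sin θ ≠ 0, ν²(1+cos θ) ≤ (5+cos θ)/9
    have key : ∀ θ : ℝ, Real.sin θ ≠ 0 →
        ν ^ 2 * (1 + Real.cos θ) ≤ (5 + Real.cos θ) / 9 := by
      intro θ hs
      have h1 := h θ
      have h2 : ‖((2 + Real.cos θ) / 3 : ℝ) - Complex.I * (ν * Real.sin θ)‖ ^ 2 ≤ 1 := by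
        nlinarith [norm_nonneg (((2 + Real.cos θ) / 3 : ℝ) - Complex.I * (ν * Real.sin θ))]
      rw [part1] at h2
      have hpyth := Real.sin_sq_add_cos_sq θ
      have hc : Real.cos θ ^ 2 < 1 := by
        nlinarith [pow_pos (abs_pos.mpr hs) 2, _root_.sq_abs (Real.sin θ)]
      have hc1 : Real.cos θ < 1 := by nlinarith
      -- ν² (1-c)(1+c) ≤ (1-c)(5+c)/9
      have hineq : ν ^ 2 * ((1 - Real.cos θ) * (1 + Real.cos θ)) ≤
          (1 - Real.cos θ) * (5 + Real.cos θ) / 9 := by nlinarith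
      have hpos : 0 < 1 - Real.cos θ := by linarith
      nlinarith
    -- take θ = 1/(n+1) → 0
    have hseq : ∀ n : ℕ, ν ^ 2 * (1 + Real.cos (1 / (n + 1))) ≤ (5 + Real.cos (1 / (n + 1))) / 9 := by
      intro n
      apply key
      have h0 : (0:ℝ) < 1 / (n + 1) := by positivity
      have h1 : (1:ℝ) / (n + 1) ≤ 1 := by
        rw [div_le_one (by positivity)]; linarith [Nat.cast_nonneg (α := ℝ) n]
      exact ne_of_gt (Real.sin_pos_of_pos_of_lt_pi h0 (lt_of_le_of_lt h1 (by linarith [Real.pi_gt_three])))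
    have hcos : Filter.Tendsto (fun n : ℕ => Real.cos (1 / (n + 1))) Filter.atTop (nhds 1) := by
      have : Filter.Tendsto (fun n : ℕ => (1:ℝ) / (n + 1)) Filter.atTop (nhds 0) :=
        tendsto_one_div_add_atTop_nhds_zero_nat
      have := (Real.continuous_cos.tendsto 0).comp this
      simpa [Function.comp_def] using this
    have hL : Filter.Tendsto (fun n : ℕ => ν ^ 2 * (1 + Real.cos (1 / (n + 1)))) Filter.atTop
        (nhds (ν ^ 2 * 2)) := by
      have := (tendsto_const_nhds (x := ν ^ 2) (f := Filter.atTop (α := ℕ))).mul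
        ((tendsto_const_nhds (x := (1:ℝ))).add hcos)
      simpa [one_add_one_eq_two] using this
    have hR : Filter.Tendsto (fun n : ℕ => (5 + Real.cos (1 / (n + 1))) / 9) Filter.atTop
        (nhds (6 / 9)) := by
      have := ((tendsto_const_nhds (x := (5:ℝ))).add hcos).div_const 9
      norm_num at this ⊢
      exact this
    have := le_of_tendsto_of_tendsto' hL hR hseq
    nlinarith
  · intro hν θ
    have habs := norm_nonneg (((2 + Real.cos θ) / 3 : ℝ) - Complex.I * (ν * Real.sin θ))
    have h2 := part1 ν θ
    have hpyth := Real.sin_sq_add_cos_sq θ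
    have hc1 := Real.neg_one_le_cos θ
    have hc2 := Real.cos_le_one θ
    nlinarith [sq_nonneg (1 - Real.cos θ), sq_nonneg (Real.sin θ)]
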